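/- Suppose W(t) = Σ_{k=1}^D σ_k(t) q_k r_kᵀ and Σ = Σ_{k=1}^D s_k q_k r_kᵀ with {q_k}, {r_k} orthonormal and σ_k(t) ≥ 0. If W satisfies the matrix ODE W' = −(W − Σ)(WᵀW)^{1/2} − (WWᵀ)^{1/2}(W − Σ), then each coefficient satisfies the decoupled scalar ODE σ_k'(t) = 2σ_k(t)(s_k − σ_k(t)). -/

import Mathlib

/-!
Let `Q` and `R` be the matrices with rows `q_k` and `r_k`, so that `Q Qᵀ = 1`, `R Rᵀ = 1` and
`W = Qᵀ diag(σ) R`, `Σ = Qᵀ diag(s) R`. Then `WᵀW = (Rᵀ diag(σ) R)²`, and `Rᵀ diag(σ) R` is positive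
semidefinite because `σ ≥ 0`, so by uniqueness of positive square roots it is `(WᵀW)^{1/2}`;
likewise `(WWᵀ)^{1/2} = Qᵀ diag(σ) Q`. The right-hand side of the ODE collapses to
`Qᵀ diag(2σ(s - σ)) R`, and differentiating `σ_k = (Q W Rᵀ)_{kk}` gives the claim.
-/

open Matrix

namespace Matrix.PosSemidef

open scoped ComplexOrder

/-- The positive semidefinite square root of a positive semidefinite matrix
(the definition Mathlib had in December 2024, since removed). -/
noncomputable def sqrt {n 𝕜 : Type*} [Fintype n] [RCLike 𝕜] [DecidableEq n]
    {A : Matrix n n 𝕜} (hA : A.PosSemidef) : Matrix n n 𝕜 :=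
  hA.1.eigenvectorUnitary.1 * diagonal ((↑) ∘ (Real.sqrt ∘ hA.1.eigenvalues)) *
  (star hA.1.eigenvectorUnitary : Matrix n n 𝕜)

end Matrix.PosSemidef

namespace Matrix

variable {ι m n p : Type*} [DecidableEq ι]

lemma sum_smul_vecMulVec_eq_transpose_mul_diagonal_mul [Fintype ι] {R : Type*} [CommSemiring R]
    (c : ι → R) (a : ι → m → R) (b : ι → n → R) :
    ∑ k, c k • vecMulVec (a k) (b k) = (of a)ᵀ * diagonal c * of b := by
  ext i j
  simp [sum_apply, mul_apply, vecMulVec_apply, diagonal_apply, mul_comm, mul_left_comm]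

lemma of_mul_transpose_of_eq_one_iff [Fintype m] {R : Type*} [CommSemiring R] (a : ι → m → R) :
    of a * (of a)ᵀ = 1 ↔ ∀ k l, a k ⬝ᵥ a l = if k = l then 1 else 0 := by
  simp only [← ext_iff, mul_apply, transpose_apply, of_apply, one_apply, dotProduct]

variable [Fintype ι]

lemma transpose_transpose_mul_diagonal_mul {R : Type*} [CommSemiring R] (A : Matrix ι m R)
    (B : Matrix ι n R) (c : ι → R) : (Aᵀ * diagonal c * B)ᵀ = Bᵀ * diagonal c * A := by
  simp only [transpose_mul, diagonal_transpose, transpose_transpose, Matrix.mul_assoc]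

lemma transpose_mul_diagonal_mul_mul_transpose_mul_diagonal_mul [Fintype n] {R : Type*}
    [CommSemiring R] {B : Matrix ι n R} (hB : B * Bᵀ = 1) (A : Matrix ι m R) (C : Matrix ι p R)
    (c d : ι → R) :
    Aᵀ * diagonal c * B * (Bᵀ * diagonal d * C) = Aᵀ * diagonal (c * d) * C := by
  simp only [Matrix.mul_assoc, ← Matrix.mul_assoc B, hB, Matrix.one_mul,
    ← Matrix.mul_assoc (diagonal c), diagonal_mul_diagonal, Pi.mul_def]

lemma mul_transpose_mul_diagonal_mul_mul_transpose [Fintype m] [Fintype n] {R : Type*}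
    [CommSemiring R] {A : Matrix ι m R} {B : Matrix ι n R} (hA : A * Aᵀ = 1) (hB : B * Bᵀ = 1)
    (c : ι → R) : A * (Aᵀ * diagonal c * B) * Bᵀ = diagonal c := by
  simp only [← Matrix.mul_assoc, hA, Matrix.one_mul]
  simp only [Matrix.mul_assoc, hB, Matrix.mul_one]

lemma posSemidef_transpose_mul_diagonal_mul [Fintype n] {c : ι → ℝ} (hc : 0 ≤ c)
    (B : Matrix ι n ℝ) : (Bᵀ * diagonal c * B).PosSemidef := by
  simpa using (PosSemidef.diagonal hc).conjTranspose_mul_mul_same B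

open scoped MatrixOrder in
lemma PosSemidef.sqrt_eq_of_sq_eq [Fintype n] [DecidableEq n] {A B : Matrix n n ℝ}
    (hA : A.PosSemidef) (hB : B.PosSemidef) (h : B ^ 2 = A) : hA.sqrt = B := by
  -- `sqrt` is the continuous functional calculus of `Real.sqrt`, where uniqueness is available.
  have hcfc : hA.sqrt = cfc Real.sqrt A := by
    rw [hA.1.cfc_eq, IsHermitian.cfc, Unitary.conjStarAlgAut_apply]
    rfl
  rw [hcfc, ← cfcₙ_eq_cfc, ← CFC.sqrt_eq_real_sqrt A hA.nonneg,
    CFC.sqrt_eq_iff A B hA.nonneg hB.nonneg, ← h, pow_two]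

lemma PosSemidef.sqrt_eq_transpose_mul_diagonal_mul [Fintype n] [DecidableEq n]
    {B : Matrix ι n ℝ} (hB : B * Bᵀ = 1) {c : ι → ℝ} (hc : 0 ≤ c) {M : Matrix n n ℝ}
    (hM : M.PosSemidef) (h : M = Bᵀ * diagonal (c * c) * B) :
    hM.sqrt = Bᵀ * diagonal c * B :=
  hM.sqrt_eq_of_sq_eq (posSemidef_transpose_mul_diagonal_mul hc B) <| by
    rw [pow_two, transpose_mul_diagonal_mul_mul_transpose_mul_diagonal_mul hB, h]

lemma hasDerivAt_mul_mul_apply {𝕜 l : Type*} [NontriviallyNormedField 𝕜]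
    [Fintype m] [Fintype n] {W : 𝕜 → Matrix m n 𝕜} {W' : Matrix m n 𝕜} {t : 𝕜}
    (h : ∀ i j, HasDerivAt (fun t => W t i j) (W' i j) t) (A : Matrix l m 𝕜) (B : Matrix n p 𝕜)
    (i : l) (j : p) : HasDerivAt (fun t => (A * W t * B) i j) ((A * W' * B) i j) t := by
  simp only [Matrix.mul_apply, Finset.sum_mul]
  exact .fun_sum fun a _ => .fun_sum fun b _ => ((h b a).const_mul (A i b)).mul_const (B a j)

end Matrix

theorem matrix_ode_decouples_to_logistic_general (di dout D : ℕ)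
    (s : Fin D → ℝ)
    (q : Fin D → Fin dout → ℝ) (r : Fin D → Fin di → ℝ)
    (hq : ∀ k l, q k ⬝ᵥ q l = if k = l then (1 : ℝ) else 0)
    (hr : ∀ k l, r k ⬝ᵥ r l = if k = l then (1 : ℝ) else 0)
    (σ σ' : Fin D → ℝ → ℝ)
    (hderiv : ∀ k t, HasDerivAt (σ k) (σ' k t) t)
    (hnn : ∀ k t, 0 ≤ σ k t)
    (W : ℝ → Matrix (Fin dout) (Fin di) ℝ)
    (hW : ∀ t, W t = ∑ k : Fin D, σ k t • vecMulVec (q k) (r k))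
    (Sig : Matrix (Fin dout) (Fin di) ℝ)
    (hSig : Sig = ∑ k : Fin D, s k • vecMulVec (q k) (r k))
    (hps1 : ∀ t, ((W t)ᵀ * W t).PosSemidef)
    (hps2 : ∀ t, (W t * (W t)ᵀ).PosSemidef)
    (hODE : ∀ t (i : Fin dout) (j : Fin di),
      HasDerivAt (fun t => W t i j)
        ((-(W t - Sig) * (hps1 t).sqrt - (hps2 t).sqrt * (W t - Sig)) i j) t) :
    ∀ k t, σ' k t = 2 * σ k t * (s k - σ k t) := by
  intro k t
  set Q := of q
  set R := of r
  have hQ : Q * Qᵀ = 1 := (of_mul_transpose_of_eq_one_iff q).2 hq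
  have hR : R * Rᵀ = 1 := (of_mul_transpose_of_eq_one_iff r).2 hr
  have hWt (u : ℝ) : W u = Qᵀ * diagonal (σ · u) * R :=
    (hW u).trans (sum_smul_vecMulVec_eq_transpose_mul_diagonal_mul _ q r)
  have hdiff : W t - Sig = Qᵀ * diagonal (fun l => σ l t - s l) * R := by
    rw [hWt, hSig, sum_smul_vecMulVec_eq_transpose_mul_diagonal_mul, ← Matrix.sub_mul,
      ← Matrix.mul_sub, diagonal_sub]
  have hsqrt1 : (hps1 t).sqrt = Rᵀ * diagonal (σ · t) * R :=
    (hps1 t).sqrt_eq_transpose_mul_diagonal_mul hR (hnn · t) <| by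
      rw [hWt, transpose_transpose_mul_diagonal_mul,
        transpose_mul_diagonal_mul_mul_transpose_mul_diagonal_mul hQ]
  have hsqrt2 : (hps2 t).sqrt = Qᵀ * diagonal (σ · t) * Q :=
    (hps2 t).sqrt_eq_transpose_mul_diagonal_mul hQ (hnn · t) <| by
      rw [hWt, transpose_transpose_mul_diagonal_mul,
        transpose_mul_diagonal_mul_mul_transpose_mul_diagonal_mul hR]
  have hsandwich : (fun u => (Q * W u * Rᵀ) k k) = σ k := funext fun u => by
    rw [hWt, mul_transpose_mul_diagonal_mul_mul_transpose hQ hR, diagonal_apply_eq]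
  have hderivSandwich := hasDerivAt_mul_mul_apply (hODE t) Q Rᵀ k k
  rw [hsandwich, hdiff, hsqrt1, hsqrt2, Matrix.neg_mul,
    transpose_mul_diagonal_mul_mul_transpose_mul_diagonal_mul hR,
    transpose_mul_diagonal_mul_mul_transpose_mul_diagonal_mul hQ] at hderivSandwich
  simp only [Matrix.mul_sub, Matrix.sub_mul, Matrix.mul_neg, Matrix.neg_mul,
    mul_transpose_mul_diagonal_mul_mul_transpose hQ hR] at hderivSandwich
  rw [(hderiv k t).unique hderivSandwich]
  simp only [Matrix.sub_apply, Matrix.neg_apply, diagonal_apply_eq, Pi.mul_apply]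
  ring

/-- If `W(t) = Σ_k σ_k(t) q_k r_kᵀ` and `Σ = Σ_k s_k q_k r_kᵀ` with orthonormal
families `{q_k}, {r_k}`, `σ_k(t) ≥ 0`, and `W` satisfies the matrix ODE
`W' = −(W − Σ)(WᵀW)^{1/2} − (WWᵀ)^{1/2}(W − Σ)`, then each coefficient satisfies
the decoupled logistic ODE `σ_k' = 2σ_k(s_k − σ_k)`. -/
theorem matrix_ode_decouples_to_logistic (di dout D : ℕ)
    (s : Fin D → ℝ) (hs : ∀ k, 0 < s k)
    (q : Fin D → Fin dout → ℝ) (r : Fin D → Fin di → ℝ)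
    (hq : ∀ k l, q k ⬝ᵥ q l = if k = l then (1 : ℝ) else 0)
    (hr : ∀ k l, r k ⬝ᵥ r l = if k = l then (1 : ℝ) else 0)
    (σ σ' : Fin D → ℝ → ℝ)
    (hderiv : ∀ k t, HasDerivAt (σ k) (σ' k t) t)
    (hnn : ∀ k t, 0 ≤ σ k t)
    (W : ℝ → Matrix (Fin dout) (Fin di) ℝ)
    (hW : ∀ t, W t = ∑ k : Fin D, σ k t • vecMulVec (q k) (r k))
    (Sig : Matrix (Fin dout) (Fin di) ℝ)
    (hSig : Sig = ∑ k : Fin D, s k • vecMulVec (q k) (r k))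
    (hps1 : ∀ t, ((W t)ᵀ * W t).PosSemidef)
    (hps2 : ∀ t, (W t * (W t)ᵀ).PosSemidef)
    (hODE : ∀ t (i : Fin dout) (j : Fin di),
      HasDerivAt (fun t => W t i j)
        ((-(W t - Sig) * (hps1 t).sqrt - (hps2 t).sqrt * (W t - Sig)) i j) t) :
    ∀ k t, σ' k t = 2 * σ k t * (s k - σ k t) :=
  matrix_ode_decouples_to_logistic_general di dout D s q r hq hr σ σ' hderiv hnn W hW Sig hSig hps1
    hps2 hODE
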